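/- Assume moreover f' > 0 (hence g' < 0) on I. Set E = ⟨z_u,z_u⟩, F = ⟨z_u,z_v⟩, G = ⟨z_v,z_v⟩, W = √(EG − F²), c¹₁₁ = ⟨z_uu,n₁⟩, c²₁₁ = ⟨z_uu,n₂⟩, c¹₁₂ = ⟨z_uv,n₁⟩, c²₁₂ = ⟨z_uv,n₂⟩, c¹₂₂ = ⟨z_vv,n₁⟩, c²₂₂ = ⟨z_vv,n₂⟩, and define L = (2/W)(c¹₁₁c²₁₂ − c²₁₁c¹₁₂), M = (1/W)(c¹₁₁c²₂₂ − c²₁₁c¹₂₂), N = (2/W)(c¹₂₂c²₂₂·0 + c¹₁₂c²₂₂ − c²₁₂c¹₂₂). Then at every (u,v) ∈ I × J: L = 0, N = 0, M² = κ_m(u)²κ̄(v)²(−2f'g')(φ̇² + φ²), and consequently the invariants satisfy k := (LN − M²)/(EG − F²) = −κ_m(u)²κ̄(v)²/f(u)² and ϰ := (EN + GL − 2FM)/(2(EG − F²)) = 0; in particular the surface has flat normal connection. -/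

import Mathlib

namespace MeridianParabolic

noncomputable section

/-- The Minkowski inner product of signature (3,1) on `ℝ⁴`:
`⟨x,y⟩ = x₁y₁ + x₂y₂ + x₃y₃ − x₄y₄`. -/
def mink (x y : Fin 4 → ℝ) : ℝ := x 0 * y 0 + x 1 * y 1 + x 2 * y 2 - x 3 * y 3

/-- The first standard basis vector `e₁`. -/
def e1 : Fin 4 → ℝ := ![1, 0, 0, 0]

/-- The second standard basis vector `e₂`. -/
def e2 : Fin 4 → ℝ := ![0, 1, 0, 0]

/-- The lightlike vector `ξ₁ = (e₃ + e₄)/√2`. -/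
def xi1 : Fin 4 → ℝ := ![0, 0, 1 / Real.sqrt 2, 1 / Real.sqrt 2]

/-- The lightlike vector `ξ₂ = (−e₃ + e₄)/√2`. -/
def xi2 : Fin 4 → ℝ := ![0, 0, -(1 / Real.sqrt 2), 1 / Real.sqrt 2]

/-- The meridian surface of parabolic type
`z(u,v) = fφ cos v · e₁ + fφ sin v · e₂ + (fφ²/2 + g) ξ₁ + f ξ₂`. -/
def z (f g φ : ℝ → ℝ) (u v : ℝ) : Fin 4 → ℝ :=
  (f u * φ v * Real.cos v) • e1 + (f u * φ v * Real.sin v) • e2 +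
    (f u * (φ v) ^ 2 / 2 + g u) • xi1 + f u • xi2

/-- The partial derivative `z_u`. -/
def zu (f g φ : ℝ → ℝ) (u v : ℝ) : Fin 4 → ℝ := deriv (fun t => z f g φ t v) u

/-- The partial derivative `z_v`. -/
def zv (f g φ : ℝ → ℝ) (u v : ℝ) : Fin 4 → ℝ := deriv (fun t => z f g φ u t) v

/-- The second partial derivative `z_uu`. -/
def zuu (f g φ : ℝ → ℝ) (u v : ℝ) : Fin 4 → ℝ := deriv (fun t => zu f g φ t v) u

/-- The second partial derivative `z_uv`. -/
def zuv (f g φ : ℝ → ℝ) (u v : ℝ) : Fin 4 → ℝ := deriv (fun t => zu f g φ u t) v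

/-- The second partial derivative `z_vv`. -/
def zvv (f g φ : ℝ → ℝ) (u v : ℝ) : Fin 4 → ℝ := deriv (fun t => zv f g φ u t) v

/-- The normal field `n₁ = ((φ̇ sin v + φ cos v) e₁ + (−φ̇ cos v + φ sin v) e₂ + φ² ξ₁)/√(φ̇² + φ²)`. -/
def n1 (φ : ℝ → ℝ) (v : ℝ) : Fin 4 → ℝ :=
  (Real.sqrt ((deriv φ v) ^ 2 + (φ v) ^ 2))⁻¹ •
    ((deriv φ v * Real.sin v + φ v * Real.cos v) • e1 +
      (-(deriv φ v) * Real.cos v + φ v * Real.sin v) • e2 + (φ v) ^ 2 • xi1)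

/-- The normal field `n₂ = √(−f'/(2g')) (φ cos v e₁ + φ sin v e₂ + ((f'φ² − 2g')/(2f')) ξ₁ + ξ₂)`. -/
def n2 (f g φ : ℝ → ℝ) (u v : ℝ) : Fin 4 → ℝ :=
  Real.sqrt (-(deriv f u) / (2 * deriv g u)) •
    ((φ v * Real.cos v) • e1 + (φ v * Real.sin v) • e2 +
      ((deriv f u * (φ v) ^ 2 - 2 * deriv g u) / (2 * deriv f u)) • xi1 + xi2)

/-- The curvature `κ_m(u) = (f'g'' − g'f'')/(−2f'g')^{3/2}` of the meridians. -/
def kappam (f g : ℝ → ℝ) (u : ℝ) : ℝ :=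
  (deriv f u * deriv (deriv g) u - deriv g u * deriv (deriv f) u) /
    (-2 * deriv f u * deriv g u) ^ ((3 : ℝ) / 2)

/-- The curvature `κ̄(v) = (φφ̈ − 2φ̇² − φ²)/(φ̇² + φ²)^{3/2}`. -/
def kappabar (φ : ℝ → ℝ) (v : ℝ) : ℝ :=
  (φ v * deriv (deriv φ) v - 2 * (deriv φ v) ^ 2 - (φ v) ^ 2) /
    ((deriv φ v) ^ 2 + (φ v) ^ 2) ^ ((3 : ℝ) / 2)

/-- The coefficient `E = ⟨z_u,z_u⟩` of the first fundamental form. -/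
def Ecoef (f g φ : ℝ → ℝ) (u v : ℝ) : ℝ := mink (zu f g φ u v) (zu f g φ u v)

/-- The coefficient `F = ⟨z_u,z_v⟩` of the first fundamental form. -/
def Fcoef (f g φ : ℝ → ℝ) (u v : ℝ) : ℝ := mink (zu f g φ u v) (zv f g φ u v)

/-- The coefficient `G = ⟨z_v,z_v⟩` of the first fundamental form. -/
def Gcoef (f g φ : ℝ → ℝ) (u v : ℝ) : ℝ := mink (zv f g φ u v) (zv f g φ u v)

/-- `W = √(EG − F²)`. -/
def Wcoef (f g φ : ℝ → ℝ) (u v : ℝ) : ℝ :=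
  Real.sqrt (Ecoef f g φ u v * Gcoef f g φ u v - (Fcoef f g φ u v) ^ 2)

/-- The coefficient `L = (2/W)(c¹₁₁c²₁₂ − c²₁₁c¹₁₂)` of the second fundamental form. -/
def Lcoef (f g φ : ℝ → ℝ) (u v : ℝ) : ℝ :=
  2 / Wcoef f g φ u v *
    (mink (zuu f g φ u v) (n1 φ v) * mink (zuv f g φ u v) (n2 f g φ u v) -
      mink (zuu f g φ u v) (n2 f g φ u v) * mink (zuv f g φ u v) (n1 φ v))

/-- The coefficient `M = (1/W)(c¹₁₁c²₂₂ − c²₁₁c¹₂₂)` of the second fundamental form. -/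
def Mcoef (f g φ : ℝ → ℝ) (u v : ℝ) : ℝ :=
  1 / Wcoef f g φ u v *
    (mink (zuu f g φ u v) (n1 φ v) * mink (zvv f g φ u v) (n2 f g φ u v) -
      mink (zuu f g φ u v) (n2 f g φ u v) * mink (zvv f g φ u v) (n1 φ v))

/-- The coefficient `N = (2/W)(c¹₁₂c²₂₂ − c²₁₂c¹₂₂)` of the second fundamental form. -/
def Ncoef (f g φ : ℝ → ℝ) (u v : ℝ) : ℝ :=
  2 / Wcoef f g φ u v *
    (mink (zvv f g φ u v) (n1 φ v) * mink (zvv f g φ u v) (n2 f g φ u v) * 0 +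
      mink (zuv f g φ u v) (n1 φ v) * mink (zvv f g φ u v) (n2 f g φ u v) -
      mink (zuv f g φ u v) (n2 f g φ u v) * mink (zvv f g φ u v) (n1 φ v))

/-!
The surface is `z(u,v) = f(u) l(v) + g(u) ξ₁`, where `l = profile φ` is the curve
`φ cos v e₁ + φ sin v e₂ + (φ²/2) ξ₁ + ξ₂` on the paraboloid `⟨l,l⟩ = 0`, `⟨l,ξ₁⟩ = -1`.
Hence `z_uv = f' l'` is parallel to the tangent vector `z_v = f l'`, so `c¹₁₂ = c²₁₂ = 0`, which
forces `L = N = 0`. Moreover `z_uu = f'' l + g'' ξ₁` is orthogonal to `n₁`, so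
`M = -c²₁₁ c¹₂₂ / W`; with `E = -2f'g'`, `F = 0`, `G = f²(φ̇² + φ²)` its square is a rational
expression, in which the square roots defining `n₁`, `n₂`, `κ_m`, `κ̄` and `W` all appear squared.
-/

open Real Filter Topology

section Smoothness

variable {𝕜 F : Type*} [NontriviallyNormedField 𝕜] [NormedAddCommGroup F] [NormedSpace 𝕜 F]
  {f : 𝕜 → F} {s : Set 𝕜} {n : WithTop ℕ∞} {x : 𝕜}

theorem _root_.ContDiffOn.eventually_differentiableAt (hf : ContDiffOn 𝕜 n f s) (hn : n ≠ 0)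
    (hs : IsOpen s) (hx : x ∈ s) : ∀ᶠ y in 𝓝 x, DifferentiableAt 𝕜 f y :=
  eventually_of_mem (hs.mem_nhds hx) fun _ hy =>
    (hf.differentiableOn hn).differentiableAt (hs.mem_nhds hy)

theorem _root_.ContDiffOn.differentiableAt_deriv (hf : ContDiffOn 𝕜 n f s) (hn : 2 ≤ n)
    (hs : IsOpen s) (hx : x ∈ s) : DifferentiableAt 𝕜 (deriv f) x :=
  ((hf.deriv_of_isOpen hs (m := 1) hn).contDiffAt (hs.mem_nhds hx)).differentiableAt one_ne_zero

end Smoothness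

theorem rpow_three_halves_sq {x : ℝ} (hx : 0 ≤ x) : (x ^ (3 / 2 : ℝ)) ^ 2 = x ^ 3 := by
  rw [← rpow_natCast, ← rpow_mul hx]
  norm_num

def frame (a b c d : ℝ) : Fin 4 → ℝ := a • e1 + b • e2 + c • xi1 + d • xi2

theorem mink_frame (a b c d a' b' c' d' : ℝ) :
    mink (frame a b c d) (frame a' b' c' d') = a * a' + b * b' - (c * d' + d * c') := by
  have hs : (√2 ^ 2)⁻¹ = 2⁻¹ := by rw [sq_sqrt zero_le_two]
  simp only [mink, frame, e1, e2, xi1, xi2, Matrix.smul_cons, Matrix.smul_empty, Matrix.add_cons,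
    Matrix.head_cons, Matrix.tail_cons, Matrix.empty_add_empty, Pi.add_apply, Matrix.cons_val_zero,
    Matrix.cons_val_one, Matrix.cons_val, smul_eq_mul, one_div, mul_one, mul_zero, mul_neg,
    add_zero, zero_add]
  linear_combination -2 * (c * d' + d * c') * hs

theorem mink_smul_left (a : ℝ) (x y : Fin 4 → ℝ) : mink (a • x) y = a * mink x y := by
  simp only [mink, Pi.smul_apply, smul_eq_mul]; ring

theorem mink_smul_right (a : ℝ) (x y : Fin 4 → ℝ) : mink x (a • y) = a * mink x y := by
  simp only [mink, Pi.smul_apply, smul_eq_mul]; ring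

theorem hasDerivAt_frame {a b c d : ℝ → ℝ} {a' b' c' d' x : ℝ} (ha : HasDerivAt a a' x)
    (hb : HasDerivAt b b' x) (hc : HasDerivAt c c' x) (hd : HasDerivAt d d' x) :
    HasDerivAt (fun t => frame (a t) (b t) (c t) (d t)) (frame a' b' c' d') x :=
  (((ha.smul_const e1).add (hb.smul_const e2)).add (hc.smul_const xi1)).add (hd.smul_const xi2)

theorem z_eq_frame (f g φ : ℝ → ℝ) (u v : ℝ) :
    z f g φ u v =
      frame (f u * φ v * cos v) (f u * φ v * sin v) (f u * φ v ^ 2 / 2 + g u) (f u) :=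
  rfl

theorem n1_eq_smul_frame (φ : ℝ → ℝ) (v : ℝ) :
    n1 φ v = (√(deriv φ v ^ 2 + φ v ^ 2))⁻¹ •
      frame (deriv φ v * sin v + φ v * cos v) (-deriv φ v * cos v + φ v * sin v)
        (φ v ^ 2) 0 := by
  simp [n1, frame]

theorem n2_eq_smul_frame (f g φ : ℝ → ℝ) (u v : ℝ) :
    n2 f g φ u v = √(-deriv f u / (2 * deriv g u)) •
      frame (φ v * cos v) (φ v * sin v)
        ((deriv f u * φ v ^ 2 - 2 * deriv g u) / (2 * deriv f u)) 1 := by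
  simp [n2, frame]

def profile (φ : ℝ → ℝ) (v : ℝ) : Fin 4 → ℝ :=
  frame (φ v * cos v) (φ v * sin v) (φ v ^ 2 / 2) 1

def dprofile (φ : ℝ → ℝ) (v : ℝ) : Fin 4 → ℝ :=
  frame (deriv φ v * cos v - φ v * sin v) (deriv φ v * sin v + φ v * cos v)
    (φ v * deriv φ v) 0

def ddprofile (φ : ℝ → ℝ) (v : ℝ) : Fin 4 → ℝ :=
  frame (deriv (deriv φ) v * cos v - 2 * deriv φ v * sin v - φ v * cos v)
    (deriv (deriv φ) v * sin v + 2 * deriv φ v * cos v - φ v * sin v)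
    (deriv φ v ^ 2 + φ v * deriv (deriv φ) v) 0

theorem z_eq_smul_profile_add (f g φ : ℝ → ℝ) (u v : ℝ) :
    z f g φ u v = f u • profile φ v + g u • xi1 := by
  simp only [z, profile, frame]
  module

section Derivatives

variable {f g φ : ℝ → ℝ} {u v : ℝ}

theorem hasDerivAt_profile (hφ : DifferentiableAt ℝ φ v) :
    HasDerivAt (profile φ) (dprofile φ v) v := by
  have hφ := hφ.hasDerivAt
  unfold profile dprofile
  refine hasDerivAt_frame ?_ ?_ ?_ (hasDerivAt_const v 1)
  · exact (hφ.fun_mul (hasDerivAt_cos v)).congr_deriv (by ring)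
  · exact (hφ.fun_mul (hasDerivAt_sin v)).congr_deriv (by ring)
  · exact ((hφ.fun_pow 2).div_const 2).congr_deriv (by push_cast; ring)

theorem hasDerivAt_dprofile (hφ : DifferentiableAt ℝ φ v)
    (hφ' : DifferentiableAt ℝ (deriv φ) v) : HasDerivAt (dprofile φ) (ddprofile φ v) v := by
  have hφ := hφ.hasDerivAt
  have hφ' := hφ'.hasDerivAt
  unfold dprofile ddprofile
  refine hasDerivAt_frame ?_ ?_ ?_ (hasDerivAt_const v 0)
  · exact ((hφ'.fun_mul (hasDerivAt_cos v)).sub (hφ.fun_mul (hasDerivAt_sin v))).congr_deriv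
      (by ring)
  · exact ((hφ'.fun_mul (hasDerivAt_sin v)).add (hφ.fun_mul (hasDerivAt_cos v))).congr_deriv
      (by ring)
  · exact (hφ.fun_mul hφ').congr_deriv (by ring)

theorem deriv_deriv_profile (hφ : ∀ᶠ t in 𝓝 v, DifferentiableAt ℝ φ t)
    (hφ' : DifferentiableAt ℝ (deriv φ) v) : deriv (deriv (profile φ)) v = ddprofile φ v := by
  have hderiv : deriv (profile φ) =ᶠ[𝓝 v] dprofile φ :=
    hφ.mono fun t ht => (hasDerivAt_profile ht).deriv
  rw [hderiv.deriv_eq]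
  exact (hasDerivAt_dprofile hφ.self_of_nhds hφ').deriv

theorem zu_eq (hf : DifferentiableAt ℝ f u) (hg : DifferentiableAt ℝ g u) :
    zu f g φ u v = z (deriv f) (deriv g) φ u v := by
  simp only [zu, z_eq_smul_profile_add]
  exact ((hf.hasDerivAt.smul_const _).add (hg.hasDerivAt.smul_const _)).deriv

theorem zuu_eq (hf : ∀ᶠ t in 𝓝 u, DifferentiableAt ℝ f t)
    (hg : ∀ᶠ t in 𝓝 u, DifferentiableAt ℝ g t) (hf' : DifferentiableAt ℝ (deriv f) u)
    (hg' : DifferentiableAt ℝ (deriv g) u) :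
    zuu f g φ u v = z (deriv (deriv f)) (deriv (deriv g)) φ u v := by
  have hzu : (fun t => zu f g φ t v) =ᶠ[𝓝 u] fun t => z (deriv f) (deriv g) φ t v :=
    (hf.and hg).mono fun t ht => zu_eq ht.1 ht.2
  rw [zuu, hzu.deriv_eq]
  exact zu_eq hf' hg'

theorem zv_eq (f g φ : ℝ → ℝ) (u v : ℝ) :
    zv f g φ u v = f u • deriv (profile φ) v := by
  simp only [zv, z_eq_smul_profile_add, deriv_add_const, deriv_fun_const_smul_field]

theorem zuv_eq (hf : DifferentiableAt ℝ f u) (hg : DifferentiableAt ℝ g u) :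
    zuv f g φ u v = deriv f u • deriv (profile φ) v := by
  simp only [zuv, zu_eq hf hg]
  exact zv_eq _ _ _ _ _

theorem zvv_eq (f g φ : ℝ → ℝ) (u v : ℝ) :
    zvv f g φ u v = f u • deriv (deriv (profile φ)) v := by
  simp only [zvv, zv_eq, deriv_fun_const_smul_field]

end Derivatives

section Pairings

variable (f g φ : ℝ → ℝ) (u v : ℝ)

theorem mink_z_self : mink (z f g φ u v) (z f g φ u v) = -2 * f u * g u := by
  rw [z_eq_frame, mink_frame]
  linear_combination (f u * φ v) ^ 2 * sin_sq_add_cos_sq v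

theorem mink_z_dprofile : mink (z f g φ u v) (dprofile φ v) = 0 := by
  rw [z_eq_frame, dprofile, mink_frame]
  linear_combination f u * φ v * deriv φ v * sin_sq_add_cos_sq v

theorem mink_dprofile_self :
    mink (dprofile φ v) (dprofile φ v) = deriv φ v ^ 2 + φ v ^ 2 := by
  rw [dprofile, mink_frame]
  linear_combination (deriv φ v ^ 2 + φ v ^ 2) * sin_sq_add_cos_sq v

theorem mink_z_n1 : mink (z f g φ u v) (n1 φ v) = 0 := by
  rw [z_eq_frame, n1_eq_smul_frame, mink_smul_right, mink_frame]
  linear_combination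
    (√(deriv φ v ^ 2 + φ v ^ 2))⁻¹ * f u * φ v ^ 2 * sin_sq_add_cos_sq v

theorem mink_dprofile_n1 : mink (dprofile φ v) (n1 φ v) = 0 := by
  rw [dprofile, n1_eq_smul_frame, mink_smul_right, mink_frame]
  ring

theorem mink_ddprofile_n1 :
    mink (ddprofile φ v) (n1 φ v) =
      (√(deriv φ v ^ 2 + φ v ^ 2))⁻¹ *
        (φ v * deriv (deriv φ) v - 2 * deriv φ v ^ 2 - φ v ^ 2) := by
  rw [ddprofile, n1_eq_smul_frame, mink_smul_right, mink_frame]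
  linear_combination (√(deriv φ v ^ 2 + φ v ^ 2))⁻¹ *
    (φ v * deriv (deriv φ) v - 2 * deriv φ v ^ 2 - φ v ^ 2) * sin_sq_add_cos_sq v

theorem mink_z_n2 {f₂ g₂ : ℝ → ℝ} (hf : deriv f u ≠ 0) :
    mink (z f₂ g₂ φ u v) (n2 f g φ u v) =
      √(-deriv f u / (2 * deriv g u)) * (f₂ u * deriv g u / deriv f u - g₂ u) := by
  have hcoord : (deriv f u * φ v ^ 2 - 2 * deriv g u) / (2 * deriv f u) =
      φ v ^ 2 / 2 - deriv g u / deriv f u := by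
    field_simp
  rw [z_eq_frame, n2_eq_smul_frame, mink_smul_right, mink_frame, hcoord]
  linear_combination √(-deriv f u / (2 * deriv g u)) * f₂ u * φ v ^ 2 * sin_sq_add_cos_sq v

theorem mink_dprofile_n2 : mink (dprofile φ v) (n2 f g φ u v) = 0 := by
  rw [dprofile, n2_eq_smul_frame, mink_smul_right, mink_frame]
  linear_combination √(-deriv f u / (2 * deriv g u)) * deriv φ v * φ v * sin_sq_add_cos_sq v

theorem mink_ddprofile_n2 :
    mink (ddprofile φ v) (n2 f g φ u v) =
      -(√(-deriv f u / (2 * deriv g u)) * (deriv φ v ^ 2 + φ v ^ 2)) := by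
  rw [ddprofile, n2_eq_smul_frame, mink_smul_right, mink_frame]
  linear_combination √(-deriv f u / (2 * deriv g u)) *
    (φ v * deriv (deriv φ) v - φ v ^ 2) * sin_sq_add_cos_sq v

end Pairings


section FundamentalForms

variable {f g φ : ℝ → ℝ} {u v : ℝ}

theorem Ecoef_eq (hf : DifferentiableAt ℝ f u) (hg : DifferentiableAt ℝ g u) :
    Ecoef f g φ u v = -2 * deriv f u * deriv g u := by
  rw [Ecoef, zu_eq hf hg, mink_z_self]

theorem Fcoef_eq_zero (hf : DifferentiableAt ℝ f u) (hg : DifferentiableAt ℝ g u)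
    (hφ : DifferentiableAt ℝ φ v) : Fcoef f g φ u v = 0 := by
  rw [Fcoef, zu_eq hf hg, zv_eq, (hasDerivAt_profile hφ).deriv, mink_smul_right,
    mink_z_dprofile, mul_zero]

theorem Gcoef_eq (hφ : DifferentiableAt ℝ φ v) :
    Gcoef f g φ u v = f u ^ 2 * (deriv φ v ^ 2 + φ v ^ 2) := by
  rw [Gcoef, zv_eq, (hasDerivAt_profile hφ).deriv, mink_smul_left, mink_smul_right,
    mink_dprofile_self]
  ring

theorem EG_sub_F_sq_eq (hf : DifferentiableAt ℝ f u) (hg : DifferentiableAt ℝ g u)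
    (hφ : DifferentiableAt ℝ φ v) :
    Ecoef f g φ u v * Gcoef f g φ u v - Fcoef f g φ u v ^ 2 =
      -2 * deriv f u * deriv g u * (f u ^ 2 * (deriv φ v ^ 2 + φ v ^ 2)) := by
  rw [Ecoef_eq hf hg, Fcoef_eq_zero hf hg hφ, Gcoef_eq hφ]
  ring

theorem mink_zuv_n1 (hf : DifferentiableAt ℝ f u) (hg : DifferentiableAt ℝ g u)
    (hφ : DifferentiableAt ℝ φ v) : mink (zuv f g φ u v) (n1 φ v) = 0 := by
  rw [zuv_eq hf hg, (hasDerivAt_profile hφ).deriv, mink_smul_left, mink_dprofile_n1, mul_zero]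

theorem mink_zuv_n2 (hf : DifferentiableAt ℝ f u) (hg : DifferentiableAt ℝ g u)
    (hφ : DifferentiableAt ℝ φ v) : mink (zuv f g φ u v) (n2 f g φ u v) = 0 := by
  rw [zuv_eq hf hg, (hasDerivAt_profile hφ).deriv, mink_smul_left, mink_dprofile_n2, mul_zero]

theorem Lcoef_eq_zero (hf : DifferentiableAt ℝ f u) (hg : DifferentiableAt ℝ g u)
    (hφ : DifferentiableAt ℝ φ v) : Lcoef f g φ u v = 0 := by
  rw [Lcoef, mink_zuv_n1 hf hg hφ, mink_zuv_n2 hf hg hφ]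
  ring

theorem Ncoef_eq_zero (hf : DifferentiableAt ℝ f u) (hg : DifferentiableAt ℝ g u)
    (hφ : DifferentiableAt ℝ φ v) : Ncoef f g φ u v = 0 := by
  rw [Ncoef, mink_zuv_n1 hf hg hφ, mink_zuv_n2 hf hg hφ]
  ring

theorem Mcoef_sq (hf : ∀ᶠ t in 𝓝 u, DifferentiableAt ℝ f t)
    (hg : ∀ᶠ t in 𝓝 u, DifferentiableAt ℝ g t) (hf' : DifferentiableAt ℝ (deriv f) u)
    (hg' : DifferentiableAt ℝ (deriv g) u) (hφ : ∀ᶠ t in 𝓝 v, DifferentiableAt ℝ φ t)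
    (hφ' : DifferentiableAt ℝ (deriv φ) v) (hfu : f u ≠ 0)
    (hfg : 0 < -(deriv f u * deriv g u)) (hφv : 0 < deriv φ v ^ 2 + φ v ^ 2) :
    Mcoef f g φ u v ^ 2 =
      kappam f g u ^ 2 * kappabar φ v ^ 2 * (-2 * deriv f u * deriv g u) *
        (deriv φ v ^ 2 + φ v ^ 2) := by
  have hf'u : deriv f u ≠ 0 := left_ne_zero_of_mul (neg_ne_zero.mp hfg.ne')
  have hg'u : deriv g u ≠ 0 := right_ne_zero_of_mul (neg_ne_zero.mp hfg.ne')
  have hD : 0 < -2 * deriv f u * deriv g u := by linarith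
  have hr : √(-deriv f u / (2 * deriv g u)) ^ 2 = -deriv f u / (2 * deriv g u) := by
    refine sq_sqrt ?_
    rw [show -deriv f u / (2 * deriv g u) = -(deriv f u * deriv g u) / (2 * deriv g u ^ 2) by
      field_simp]
    positivity
  have hEG := EG_sub_F_sq_eq (φ := φ) (v := v) hf.self_of_nhds hg.self_of_nhds hφ.self_of_nhds
  have hW : Wcoef f g φ u v ^ 2 =
      -2 * deriv f u * deriv g u * (f u ^ 2 * (deriv φ v ^ 2 + φ v ^ 2)) := by
    rw [Wcoef, sq_sqrt (by rw [hEG]; positivity), hEG]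
  rw [Mcoef, zuu_eq hf hg hf' hg', zvv_eq, deriv_deriv_profile hφ hφ', mink_z_n1,
    mink_z_n2 _ _ _ _ _ hf'u, mink_smul_left, mink_smul_left, mink_ddprofile_n1,
    mink_ddprofile_n2]
  calc _ = √(-deriv f u / (2 * deriv g u)) ^ 2 *
        (deriv (deriv f) u * deriv g u / deriv f u - deriv (deriv g) u) ^ 2 * f u ^ 2 *
        (φ v * deriv (deriv φ) v - 2 * deriv φ v ^ 2 - φ v ^ 2) ^ 2 /
        (√(deriv φ v ^ 2 + φ v ^ 2) ^ 2 * Wcoef f g φ u v ^ 2) := by ring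
    _ = _ := by
      rw [hr, sq_sqrt hφv.le, hW, kappam, kappabar, div_pow, div_pow,
        rpow_three_halves_sq hD.le, rpow_three_halves_sq hφv.le]
      field_simp
      ring

end FundamentalForms


theorem statement5_general
    (I J : Set ℝ) (hIopen : IsOpen I)
    (hJopen : IsOpen J)
    (f g φ : ℝ → ℝ)
    (hf : ContDiffOn ℝ (⊤ : ℕ∞) f I) (hg : ContDiffOn ℝ (⊤ : ℕ∞) g I)
    (hφ : ContDiffOn ℝ (⊤ : ℕ∞) φ J)
    (hfpos : ∀ u ∈ I, 0 < f u)
    (hfg : ∀ u ∈ I, 0 < -(deriv f u * deriv g u))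
    (hφpos : ∀ v ∈ J, 0 < (deriv φ v) ^ 2 + (φ v) ^ 2) :
    ∀ u ∈ I, ∀ v ∈ J,
      Lcoef f g φ u v = 0 ∧
      Ncoef f g φ u v = 0 ∧
      (Mcoef f g φ u v) ^ 2 =
        (kappam f g u) ^ 2 * (kappabar φ v) ^ 2 * (-2 * deriv f u * deriv g u) *
          ((deriv φ v) ^ 2 + (φ v) ^ 2) ∧
      (Lcoef f g φ u v * Ncoef f g φ u v - (Mcoef f g φ u v) ^ 2) /
          (Ecoef f g φ u v * Gcoef f g φ u v - (Fcoef f g φ u v) ^ 2) =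
        -((kappam f g u) ^ 2 * (kappabar φ v) ^ 2) / f u ^ 2 ∧
      (Ecoef f g φ u v * Ncoef f g φ u v + Gcoef f g φ u v * Lcoef f g φ u v -
            2 * Fcoef f g φ u v * Mcoef f g φ u v) /
          (2 * (Ecoef f g φ u v * Gcoef f g φ u v - (Fcoef f g φ u v) ^ 2)) = 0 := by
  intro u hu v hv
  have hn1 : ((⊤ : ℕ∞) : WithTop ℕ∞) ≠ 0 := by simp
  have hn2 : (2 : WithTop ℕ∞) ≤ (⊤ : ℕ∞) := WithTop.coe_le_coe.mpr le_top
  have hfe := hf.eventually_differentiableAt hn1 hIopen hu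
  have hge := hg.eventually_differentiableAt hn1 hIopen hu
  have hφe := hφ.eventually_differentiableAt hn1 hJopen hv
  have hfu := hfe.self_of_nhds
  have hgu := hge.self_of_nhds
  have hφv := hφe.self_of_nhds
  have hL := Lcoef_eq_zero hfu hgu hφv
  have hN := Ncoef_eq_zero hfu hgu hφv
  have hM := Mcoef_sq hfe hge (hf.differentiableAt_deriv hn2 hIopen hu)
    (hg.differentiableAt_deriv hn2 hIopen hu) hφe (hφ.differentiableAt_deriv hn2 hJopen hv)
    (hfpos u hu).ne' (hfg u hu) (hφpos v hv)
  have hEG := EG_sub_F_sq_eq (φ := φ) (v := v) hfu hgu hφv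
  refine ⟨hL, hN, hM, ?_, ?_⟩
  · have hD : 0 < -2 * deriv f u * deriv g u := by linarith [hfg u hu]
    have hEGpos := mul_pos hD (mul_pos (pow_pos (hfpos u hu) 2) (hφpos v hv))
    rw [hL, hN, hM, hEG, div_eq_div_iff hEGpos.ne' (pow_pos (hfpos u hu) 2).ne']
    ring
  · rw [hL, hN, Fcoef_eq_zero hfu hgu hφv]
    simp

/-- assuming `f' > 0`, for the meridian surface of parabolic type
`L = 0`, `N = 0`, `M² = κ_m²κ̄²(−2f'g')(φ̇² + φ²)`, and the invariants satisfy
`k = (LN − M²)/(EG − F²) = −κ_m²κ̄²/f²` and `ϰ = (EN + GL − 2FM)/(2(EG − F²)) = 0`;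
in particular the surface has flat normal connection. -/
theorem statement5
    (I J : Set ℝ) (hIopen : IsOpen I) (hIconn : IsPreconnected I)
    (hJopen : IsOpen J) (hJconn : IsPreconnected J)
    (f g φ : ℝ → ℝ)
    (hf : ContDiffOn ℝ (⊤ : ℕ∞) f I) (hg : ContDiffOn ℝ (⊤ : ℕ∞) g I)
    (hφ : ContDiffOn ℝ (⊤ : ℕ∞) φ J)
    (hfpos : ∀ u ∈ I, 0 < f u)
    (hfg : ∀ u ∈ I, 0 < -(deriv f u * deriv g u))
    (hφpos : ∀ v ∈ J, 0 < (deriv φ v) ^ 2 + (φ v) ^ 2)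
    (hfd : ∀ u ∈ I, 0 < deriv f u) (hgd : ∀ u ∈ I, deriv g u < 0) :
    ∀ u ∈ I, ∀ v ∈ J,
      Lcoef f g φ u v = 0 ∧
      Ncoef f g φ u v = 0 ∧
      (Mcoef f g φ u v) ^ 2 =
        (kappam f g u) ^ 2 * (kappabar φ v) ^ 2 * (-2 * deriv f u * deriv g u) *
          ((deriv φ v) ^ 2 + (φ v) ^ 2) ∧
      (Lcoef f g φ u v * Ncoef f g φ u v - (Mcoef f g φ u v) ^ 2) /
          (Ecoef f g φ u v * Gcoef f g φ u v - (Fcoef f g φ u v) ^ 2) =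
        -((kappam f g u) ^ 2 * (kappabar φ v) ^ 2) / f u ^ 2 ∧
      (Ecoef f g φ u v * Ncoef f g φ u v + Gcoef f g φ u v * Lcoef f g φ u v -
            2 * Fcoef f g φ u v * Mcoef f g φ u v) /
          (2 * (Ecoef f g φ u v * Gcoef f g φ u v - (Fcoef f g φ u v) ^ 2)) = 0 :=
  statement5_general I J hIopen hJopen f g φ hf hg hφ hfpos hfg hφpos

end
end MeridianParabolic
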